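/- Dually, for the 'sup-sup' stopping problem on a finite filtered space: $Z_t := \sup_{\tau \in \mathcal{T}_t} \mathcal{E}_t[f_\tau]$ satisfies $Z_T = f_T$, $Z_t = f_t \vee \mathcal{E}_t(Z_{t+1})$, and $\tau^{**} := \inf\{t \ge 0 : f_t = Z_t\}$ is optimal: $Z_0 = \mathcal{E}[f_{\tau^{**}}]$. -/

import Mathlib

/-! Adverse optimal stopping for nonlinear expectations on the product path space
`Ω = Ω₁^ℕ` (coordinates `0, …, T-1` are observed at times `1, …, T`), with `Ω₁` finite.
`R t ω` is the set of one-step transition laws available at time `t` in state `ω`;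
the pasting-stable family `𝔯_t(ω)` is encoded by the recursively defined nonlinear
conditional expectation `NE`. -/

/-- The nonlinear conditional expectation `𝓔_t[ξ](ω) = sup_{P ∈ 𝔯_t(ω)} E_P[ξ(ω^t, ·)]`
obtained by backward recursion over the one-step kernel sets `R`. -/
noncomputable def NE {Ω₁ : Type*} [Fintype Ω₁] (T : ℕ)
    (R : ℕ → (ℕ → Ω₁) → Set (Ω₁ → ℝ)) (t : ℕ) (ξ : (ℕ → Ω₁) → ℝ) : (ℕ → Ω₁) → ℝ :=
  if h : T ≤ t then ξ
  else fun ω =>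
    sSup ((fun P : Ω₁ → ℝ =>
      ∑ x : Ω₁, P x * NE T R (t + 1) ξ (Function.update ω t x)) '' R t ω)
termination_by T - t
decreasing_by omega

/-- Stopping times of the raw filtration with values in `[t, T]`. -/
def IsStopAt {Ω₁ : Type*} (T t : ℕ) (τ : (ℕ → Ω₁) → ℕ) : Prop :=
  (∀ ω, t ≤ τ ω ∧ τ ω ≤ T) ∧
  ∀ s : ℕ, ∀ ω ω' : ℕ → Ω₁, (∀ j, j < s → ω j = ω' j) → τ ω = s → τ ω' = s

/-- An adapted payoff process: `f t` depends only on the first `t` coordinates. -/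
def AdaptedProc {Ω₁ : Type*} (T : ℕ) (f : ℕ → (ℕ → Ω₁) → ℝ) : Prop :=
  ∀ t ≤ T, ∀ ω ω' : ℕ → Ω₁, (∀ j, j < t → ω j = ω' j) → f t ω = f t ω'

/-- The one-step kernel sets are nonempty convex-free families of probability vectors,
depending only on the past. -/
def GoodKernels {Ω₁ : Type*} [Fintype Ω₁] (T : ℕ)
    (R : ℕ → (ℕ → Ω₁) → Set (Ω₁ → ℝ)) : Prop :=
  ∀ t, t < T → ∀ ω : ℕ → Ω₁,
    (R t ω).Nonempty ∧
    (∀ P ∈ R t ω, (∀ x, 0 ≤ P x) ∧ ∑ x : Ω₁, P x = 1) ∧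
    (∀ ω' : ℕ → Ω₁, (∀ j, j < t → ω j = ω' j) → R t ω = R t ω')

/-- The upper value process `X t = inf_{τ ∈ 𝒯_t} 𝓔_t[f_τ]`. -/
noncomputable def upValue {Ω₁ : Type*} [Fintype Ω₁] (T : ℕ)
    (R : ℕ → (ℕ → Ω₁) → Set (Ω₁ → ℝ)) (f : ℕ → (ℕ → Ω₁) → ℝ) (t : ℕ) :
    (ℕ → Ω₁) → ℝ :=
  fun ω => ⨅ τ : {τ : (ℕ → Ω₁) → ℕ // IsStopAt T t τ},
    NE T R t (fun ω' => f (τ.1 ω') ω') ω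
/-- The value process `Z t = sup_{τ ∈ 𝒯_t} 𝓔_t[f_τ]` of the `sup sup` problem. -/
noncomputable def supValue {Ω₁ : Type*} [Fintype Ω₁] (T : ℕ)
    (R : ℕ → (ℕ → Ω₁) → Set (Ω₁ → ℝ)) (f : ℕ → (ℕ → Ω₁) → ℝ) (t : ℕ) :
    (ℕ → Ω₁) → ℝ :=
  fun ω => ⨆ τ : {τ : (ℕ → Ω₁) → ℕ // IsStopAt T t τ},
    NE T R t (fun ω' => f (τ.1 ω') ω') ω


/-! The candidate value is the nonlinear Snell envelope `Y`, given by the backward recursion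
`Y_T = f_T`, `Y_t = f_t ∨ 𝓔_t[Y_{t+1}]`. Backward induction gives `𝓔_t[f_τ] ≤ Y_t` for every
stopping time `τ ≥ t`: on the `𝓕_t`-event `{τ = t}` the payoff is `f_t`, and on `{τ > t}` one may
replace `τ` by the stopping time `τ ∨ (t + 1)`, bound `𝓔_{t+1}[f_{τ ∨ (t+1)}] ≤ Y_{t+1}` and use
that `𝓔_t` is monotone in `𝓔_{t+1}[·]`. The same induction shows that the first time `Y` meets `f`
attains the bound, so `Z = Y`. -/

open Set

section NonlinearExpectation

variable {Ω₁ : Type*} [Fintype Ω₁] {T : ℕ} {R : ℕ → (ℕ → Ω₁) → Set (Ω₁ → ℝ)}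
  {ξ η : (ℕ → Ω₁) → ℝ}

lemma NE_of_le {t : ℕ} (h : T ≤ t) (ξ : (ℕ → Ω₁) → ℝ) : NE T R t ξ = ξ := by
  rw [NE, dif_pos h]

lemma NE_of_lt {t : ℕ} (h : t < T) (ξ : (ℕ → Ω₁) → ℝ) (ω : ℕ → Ω₁) :
    NE T R t ξ ω = sSup ((fun P : Ω₁ → ℝ =>
      ∑ x : Ω₁, P x * NE T R (t + 1) ξ (Function.update ω t x)) '' R t ω) := by
  rw [NE, dif_neg (not_le.2 h)]

lemma NE_congr_cylinder {t : ℕ} {ω : ℕ → Ω₁} (h : ∀ ω', (∀ j < t, ω' j = ω j) → ξ ω' = η ω') :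
    NE T R t ξ ω = NE T R t η ω := by
  by_cases hT : T ≤ t
  · rw [NE_of_le hT, NE_of_le hT]
    exact h ω fun _ _ => rfl
  · rw [NE_of_lt (not_le.1 hT), NE_of_lt (not_le.1 hT)]
    congr! 4 with P x
    refine NE_congr_cylinder fun ω' hω' => h ω' fun j hj => ?_
    rw [hω' j (Nat.lt_succ_of_lt hj), Function.update_of_ne hj.ne]
termination_by T - t

lemma NE_congr_succ {t : ℕ} (h : ∀ ω, NE T R (t + 1) ξ ω = NE T R (t + 1) η ω) :
    NE T R t ξ = NE T R t η := by
  by_cases hT : T ≤ t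
  · simp only [NE_of_le hT, NE_of_le (hT.trans t.le_succ)] at h ⊢
    exact funext h
  · funext ω
    simp only [NE_of_lt (not_le.1 hT), h]

lemma bddAbove_image_sum_mul {t : ℕ} (hR : GoodKernels T R) (ht : t < T) (ω : ℕ → Ω₁)
    (g : Ω₁ → ℝ) :
    BddAbove ((fun P : Ω₁ → ℝ => ∑ x : Ω₁, P x * g x) '' R t ω) := by
  obtain ⟨M, hM⟩ := (finite_range g).bddAbove
  refine ⟨M, ?_⟩
  rintro _ ⟨P, hP, rfl⟩
  obtain ⟨hP0, hP1⟩ := (hR t ht ω).2.1 P hP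
  calc ∑ x, P x * g x ≤ ∑ x, P x * M :=
        Finset.sum_le_sum fun x _ => mul_le_mul_of_nonneg_left (hM (mem_range_self x)) (hP0 x)
    _ = M := by rw [← Finset.sum_mul, hP1, one_mul]

lemma NE_le_NE_of_succ {t : ℕ} (hR : GoodKernels T R)
    (h : ∀ ω, NE T R (t + 1) ξ ω ≤ NE T R (t + 1) η ω) (ω : ℕ → Ω₁) :
    NE T R t ξ ω ≤ NE T R t η ω := by
  by_cases hT : T ≤ t
  · simpa only [NE_of_le hT, NE_of_le (hT.trans t.le_succ)] using h ω
  rw [NE_of_lt (not_le.1 hT), NE_of_lt (not_le.1 hT)]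
  refine csSup_le ((hR t (not_le.1 hT) ω).1.image _) ?_
  rintro _ ⟨P, hP, rfl⟩
  refine le_csSup_of_le (bddAbove_image_sum_mul hR (not_le.1 hT) ω _) (mem_image_of_mem _ hP) ?_
  exact Finset.sum_le_sum fun x _ =>
    mul_le_mul_of_nonneg_left (h _) (((hR t (not_le.1 hT) ω).2.1 P hP).1 x)

lemma NE_dependsOn {t : ℕ} (hR : GoodKernels T R) (hξ : DependsOn ξ (Iio T)) (ht : t ≤ T) :
    DependsOn (NE T R t ξ) (Iio t) := by
  by_cases hT : T ≤ t
  · rw [NE_of_le hT]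
    exact hξ.mono (Iio_subset_Iio hT)
  intro ω ω' hωω'
  rw [NE_of_lt (not_le.1 hT), NE_of_lt (not_le.1 hT), (hR t (not_le.1 hT) ω).2.2 ω' hωω']
  congr! 4 with P x
  refine NE_dependsOn hR hξ (not_le.1 hT) fun j hj => ?_
  rcases Nat.lt_succ_iff_lt_or_eq.1 hj with hj | rfl
  · rw [Function.update_of_ne hj.ne, Function.update_of_ne hj.ne, hωω' j hj]
  · rw [Function.update_self, Function.update_self]
termination_by T - t

lemma NE_of_dependsOn {t : ℕ} (hR : GoodKernels T R) (hξ : DependsOn ξ (Iio t)) :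
    NE T R t ξ = ξ := by
  by_cases hT : T ≤ t
  · exact NE_of_le hT ξ
  funext ω
  have hnext : ∀ x, NE T R (t + 1) ξ (Function.update ω t x) = ξ ω := fun x => by
    rw [NE_of_dependsOn hR (hξ.mono (Iio_subset_Iio t.le_succ))]
    exact hξ fun j hj => Function.update_of_ne (ne_of_lt hj) x ω
  have himage : (fun P : Ω₁ → ℝ => ∑ x, P x * NE T R (t + 1) ξ (Function.update ω t x)) ''
      R t ω = {ξ ω} := by
    refine (eq_singleton_iff_nonempty_unique_mem.2 ⟨(hR t (not_le.1 hT) ω).1.image _, ?_⟩)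
    rintro _ ⟨P, hP, rfl⟩
    simp only [hnext, ← Finset.sum_mul, ((hR t (not_le.1 hT) ω).2.1 P hP).2, one_mul]
  rw [NE_of_lt (not_le.1 hT), himage, csSup_singleton]
termination_by T - t

end NonlinearExpectation

lemma IsStopAt.max_succ {Ω₁ : Type*} {T t : ℕ} {τ : (ℕ → Ω₁) → ℕ} (hτ : IsStopAt T t τ)
    (ht : t < T) : IsStopAt T (t + 1) (fun ω => max (τ ω) (t + 1)) := by
  refine ⟨fun ω => ⟨le_max_right _ _, max_le (hτ.1 ω).2 ht⟩, fun s ω ω' hωω' hs => ?_⟩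
  dsimp only at hs ⊢
  rcases le_or_gt (τ ω) (t + 1) with hle | hlt
  · rw [max_eq_right hle] at hs
    subst hs
    rw [hτ.2 (τ ω) ω ω' (fun j hj => hωω' j (hj.trans_le hle)) rfl, max_eq_right hle]
  · rw [max_eq_left hlt.le] at hs
    rw [hτ.2 s ω ω' hωω' hs, max_eq_left (hs ▸ hlt.le)]

section HitTime

variable {Ω β : Type*} {f g : ℕ → Ω → β} {T t : ℕ} {ω : Ω}

noncomputable def hitTime (f g : ℕ → Ω → β) (t : ℕ) (ω : Ω) : ℕ :=
  sInf {s | t ≤ s ∧ f s ω = g s ω}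

lemma hitTime_spec (ht : t ≤ T) (hT : f T ω = g T ω) :
    t ≤ hitTime f g t ω ∧ f (hitTime f g t ω) ω = g (hitTime f g t ω) ω :=
  Nat.sInf_mem (s := {s | t ≤ s ∧ f s ω = g s ω}) ⟨T, ht, hT⟩

lemma hitTime_le (ht : t ≤ T) (hT : f T ω = g T ω) : hitTime f g t ω ≤ T :=
  Nat.sInf_le ⟨ht, hT⟩

lemma hitTime_of_eq (h : f t ω = g t ω) : hitTime f g t ω = t :=
  le_antisymm (Nat.sInf_le ⟨le_rfl, h⟩) (hitTime_spec le_rfl h).1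

lemma hitTime_of_ne (h : f t ω ≠ g t ω) : hitTime f g t ω = hitTime f g (t + 1) ω := by
  refine congrArg sInf (ext fun s => ⟨fun ⟨hts, hs⟩ => ⟨?_, hs⟩, fun ⟨hts, hs⟩ => ⟨by omega, hs⟩⟩)
  exact lt_of_le_of_ne hts (by rintro rfl; exact h hs)

lemma hitTime_congr {g' : ℕ → Ω → β} (ht : t ≤ T) (hT : f T ω = g T ω)
    (hgg' : ∀ s ≤ T, g s ω = g' s ω) : hitTime f g t ω = hitTime f g' t ω := by
  have hT' : f T ω = g' T ω := hT.trans (hgg' T le_rfl)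
  obtain ⟨hts, hs⟩ := hitTime_spec ht hT
  obtain ⟨hts', hs'⟩ := hitTime_spec ht hT'
  exact le_antisymm (Nat.sInf_le ⟨hts', hs'.trans (hgg' _ (hitTime_le ht hT')).symm⟩)
    (Nat.sInf_le ⟨hts, hs.trans (hgg' _ (hitTime_le ht hT))⟩)

end HitTime

lemma isStopAt_hitTime {Ω₁ : Type*} {T t : ℕ} {f g : ℕ → (ℕ → Ω₁) → ℝ} (hf : AdaptedProc T f)
    (hg : AdaptedProc T g) (hT : ∀ ω, f T ω = g T ω) (ht : t ≤ T) :
    IsStopAt T t (hitTime f g t) := by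
  refine ⟨fun ω => ⟨(hitTime_spec ht (hT ω)).1, hitTime_le ht (hT ω)⟩, ?_⟩
  rintro s ω ω' hωω' rfl
  have hmeet : ∀ r ≤ hitTime f g t ω, (f r ω = g r ω ↔ f r ω' = g r ω') := fun r hr => by
    have hrT := hr.trans (hitTime_le ht (hT ω))
    have hωω'r : ∀ j < r, ω j = ω' j := fun j hj => hωω' j (hj.trans_le hr)
    rw [hf r hrT ω ω' hωω'r, hg r hrT ω ω' hωω'r]
  obtain ⟨hts, hs⟩ := hitTime_spec ht (hT ω)
  refine le_antisymm (Nat.sInf_le ⟨hts, (hmeet _ le_rfl).1 hs⟩) (not_lt.1 fun hlt => ?_)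
  obtain ⟨hts', hs'⟩ := hitTime_spec ht (hT ω')
  have hle : hitTime f g t ω ≤ hitTime f g t ω' := Nat.sInf_le ⟨hts', (hmeet _ hlt.le).2 hs'⟩
  exact hle.not_gt hlt

noncomputable def snellEnvelope {Ω₁ : Type*} [Fintype Ω₁] (T : ℕ)
    (R : ℕ → (ℕ → Ω₁) → Set (Ω₁ → ℝ)) (f : ℕ → (ℕ → Ω₁) → ℝ) (t : ℕ) : (ℕ → Ω₁) → ℝ :=
  if T ≤ t then f T
  else fun ω => max (f t ω) (NE T R t (snellEnvelope T R f (t + 1)) ω)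
termination_by T - t

section SnellEnvelope

variable {Ω₁ : Type*} [Fintype Ω₁] {T : ℕ} {R : ℕ → (ℕ → Ω₁) → Set (Ω₁ → ℝ)}
  {f : ℕ → (ℕ → Ω₁) → ℝ}

lemma snellEnvelope_of_le {t : ℕ} (h : T ≤ t) : snellEnvelope T R f t = f T := by
  rw [snellEnvelope, if_pos h]

lemma snellEnvelope_of_lt {t : ℕ} (h : t < T) (ω : ℕ → Ω₁) :
    snellEnvelope T R f t ω = max (f t ω) (NE T R t (snellEnvelope T R f (t + 1)) ω) := by
  rw [snellEnvelope, if_neg (not_le.2 h)]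

lemma snellEnvelope_dependsOn (hR : GoodKernels T R) (hf : AdaptedProc T f) {t : ℕ}
    (ht : t ≤ T) : DependsOn (snellEnvelope T R f t) (Iio t) := by
  by_cases hT : T ≤ t
  · rw [snellEnvelope_of_le hT]
    exact fun ω ω' h => hf T le_rfl ω ω' fun j hj => h j (hj.trans_le hT)
  intro ω ω' hωω'
  have hnext := snellEnvelope_dependsOn hR hf (not_le.1 hT)
  rw [snellEnvelope_of_lt (not_le.1 hT), snellEnvelope_of_lt (not_le.1 hT), hf t ht ω ω' hωω',
    NE_dependsOn hR (hnext.mono (Iio_subset_Iio (not_le.1 hT))) ht hωω']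
termination_by T - t

lemma snellEnvelope_adapted (hR : GoodKernels T R) (hf : AdaptedProc T f) :
    AdaptedProc T (snellEnvelope T R f) :=
  fun _ ht _ _ h => snellEnvelope_dependsOn hR hf ht h

lemma NE_snellEnvelope_succ (hR : GoodKernels T R) (hf : AdaptedProc T f) {t : ℕ} (ht : t < T) :
    NE T R (t + 1) (snellEnvelope T R f (t + 1)) = snellEnvelope T R f (t + 1) :=
  NE_of_dependsOn hR (snellEnvelope_dependsOn hR hf ht)

theorem NE_stopped_le_snellEnvelope (hR : GoodKernels T R) (hf : AdaptedProc T f) {t : ℕ}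
    {τ : (ℕ → Ω₁) → ℕ} (hτ : IsStopAt T t τ) (ω : ℕ → Ω₁) :
    NE T R t (fun ω' => f (τ ω') ω') ω ≤ snellEnvelope T R f t ω := by
  by_cases hT : T ≤ t
  · rw [NE_of_le hT, snellEnvelope_of_le hT, le_antisymm (hτ.1 ω).2 (hT.trans (hτ.1 ω).1)]
  have ht := not_le.1 hT
  rw [snellEnvelope_of_lt ht]
  by_cases hτω : τ ω = t
  · calc NE T R t (fun ω' => f (τ ω') ω') ω = NE T R t (f t) ω :=
          NE_congr_cylinder fun ω' h => by rw [hτ.2 t ω ω' (fun j hj => (h j hj).symm) hτω]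
      _ = f t ω := by rw [NE_of_dependsOn hR (fun _ _ h => hf t ht.le _ _ h)]
      _ ≤ _ := le_max_left _ _
  · calc NE T R t (fun ω' => f (τ ω') ω') ω
          = NE T R t (fun ω' => f (max (τ ω') (t + 1)) ω') ω := NE_congr_cylinder fun ω' h => by
            have hτω' : τ ω' ≠ t := fun h' => hτω (hτ.2 t ω' ω h h')
            rw [max_eq_left (Nat.succ_le_of_lt (lt_of_le_of_ne (hτ.1 ω').1 (Ne.symm hτω')))]
      _ ≤ NE T R t (snellEnvelope T R f (t + 1)) ω := NE_le_NE_of_succ hR (fun ω' => by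
            rw [NE_snellEnvelope_succ hR hf ht]
            exact NE_stopped_le_snellEnvelope hR hf (hτ.max_succ ht) ω') ω
      _ ≤ _ := le_max_right _ _
termination_by T - t

theorem NE_stopped_hitTime_snellEnvelope (hR : GoodKernels T R) (hf : AdaptedProc T f) {t : ℕ}
    (ht : t ≤ T) (ω : ℕ → Ω₁) :
    NE T R t (fun ω' => f (hitTime f (snellEnvelope T R f) t ω') ω') ω =
      snellEnvelope T R f t ω := by
  by_cases hT : T ≤ t
  · obtain rfl : t = T := le_antisymm ht hT
    rw [NE_of_le le_rfl, snellEnvelope_of_le le_rfl,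
      hitTime_of_eq (by rw [snellEnvelope_of_le le_rfl])]
  have hlt := not_le.1 hT
  have hcyl : ∀ ω', (∀ j < t, ω' j = ω j) →
      (f t ω' = snellEnvelope T R f t ω' ↔ f t ω = snellEnvelope T R f t ω) := fun ω' h => by
    rw [hf t ht ω' ω h, snellEnvelope_adapted hR hf t ht ω' ω h]
  by_cases hstop : f t ω = snellEnvelope T R f t ω
  · calc NE T R t (fun ω' => f (hitTime f (snellEnvelope T R f) t ω') ω') ω = NE T R t (f t) ω :=
          NE_congr_cylinder fun ω' h => by rw [hitTime_of_eq ((hcyl ω' h).2 hstop)]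
      _ = f t ω := by rw [NE_of_dependsOn hR (fun _ _ h => hf t ht _ _ h)]
      _ = _ := hstop
  · have hcont : snellEnvelope T R f t ω = NE T R t (snellEnvelope T R f (t + 1)) ω := by
      rw [snellEnvelope_of_lt hlt] at hstop ⊢
      exact (max_choice _ _).resolve_left fun h => hstop h.symm
    calc NE T R t (fun ω' => f (hitTime f (snellEnvelope T R f) t ω') ω') ω
          = NE T R t (fun ω' => f (hitTime f (snellEnvelope T R f) (t + 1) ω') ω') ω :=
          NE_congr_cylinder fun ω' h => by
            rw [hitTime_of_ne fun h' => hstop ((hcyl ω' h).1 h')]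
      _ = NE T R t (snellEnvelope T R f (t + 1)) ω := congrFun (NE_congr_succ fun ω' => by
            rw [NE_stopped_hitTime_snellEnvelope hR hf hlt, NE_snellEnvelope_succ hR hf hlt]) ω
      _ = _ := hcont.symm
termination_by T - t

theorem supValue_eq_snellEnvelope (hR : GoodKernels T R) (hf : AdaptedProc T f) {t : ℕ}
    (ht : t ≤ T) : supValue T R f t = snellEnvelope T R f t := by
  funext ω
  have : Nonempty {τ : (ℕ → Ω₁) → ℕ // IsStopAt T t τ} :=
    ⟨⟨fun _ => T, fun _ => ⟨ht, le_rfl⟩, fun _ _ _ _ h => h⟩⟩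
  have hbound (τ : {τ : (ℕ → Ω₁) → ℕ // IsStopAt T t τ}) :=
    NE_stopped_le_snellEnvelope hR hf τ.2 ω
  have hτ : IsStopAt T t (hitTime f (snellEnvelope T R f) t) :=
    isStopAt_hitTime hf (snellEnvelope_adapted hR hf)
      (fun ω => by rw [snellEnvelope_of_le le_rfl]) ht
  refine le_antisymm (ciSup_le hbound) ?_
  rw [← NE_stopped_hitTime_snellEnvelope hR hf ht ω]
  exact le_ciSup (f := fun τ : {τ // IsStopAt T t τ} => NE T R t (fun ω' => f (τ.1 ω') ω') ω)
    ⟨_, forall_mem_range.2 hbound⟩ ⟨_, hτ⟩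

end SnellEnvelope

theorem stmt12_general {Ω₁ : Type*} [Fintype Ω₁] (T : ℕ)
    (R : ℕ → (ℕ → Ω₁) → Set (Ω₁ → ℝ)) (f : ℕ → (ℕ → Ω₁) → ℝ)
    (hR : GoodKernels T R) (hf : AdaptedProc T f) :
    (∀ ω, supValue T R f T ω = f T ω) ∧
    (∀ t, t < T → ∀ ω,
      supValue T R f t ω = max (f t ω) (NE T R t (supValue T R f (t + 1)) ω)) ∧
    IsStopAt T 0 (fun ω => sInf {t : ℕ | f t ω = supValue T R f t ω}) ∧
    (∀ ω, supValue T R f 0 ω =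
      NE T R 0 (fun ω' => f (sInf {t : ℕ | f t ω' = supValue T R f t ω'}) ω') ω) := by
  have hZ (t : ℕ) (ht : t ≤ T) := supValue_eq_snellEnvelope hR hf ht
  have hZT (ω : ℕ → Ω₁) : f T ω = supValue T R f T ω := by
    rw [hZ T le_rfl, snellEnvelope_of_le le_rfl]
  have hZadapted : AdaptedProc T (supValue T R f) := fun t ht ω ω' h => by
    simpa only [hZ t ht] using snellEnvelope_adapted hR hf t ht ω ω' h
  have hτ (ω : ℕ → Ω₁) : sInf {t : ℕ | f t ω = supValue T R f t ω} =
      hitTime f (supValue T R f) 0 ω := by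
    simp only [hitTime, zero_le, true_and]
  refine ⟨fun ω => (hZT ω).symm, fun t ht ω => ?_,
    funext hτ ▸ isStopAt_hitTime hf hZadapted hZT T.zero_le, fun ω => ?_⟩
  · rw [hZ t ht.le, hZ (t + 1) ht, snellEnvelope_of_lt ht]
  · simp only [hτ]
    rw [hZ 0 T.zero_le, ← NE_stopped_hitTime_snellEnvelope hR hf T.zero_le ω]
    refine congrFun (congrArg _ (funext fun ω' => ?_)) ω
    rw [hitTime_congr T.zero_le (hZT ω') fun s hs => congrFun (hZ s hs) ω']

/-- Dynamic programming for the `sup sup` stopping problem: `Z T = f T`,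
`Z t = max (f t) (𝓔_t Z_{t+1})`, and the first hitting time
`τ** = inf {t : f t = Z t}` is optimal: `Z 0 = 𝓔[f_{τ**}]`. -/
theorem stmt12 {Ω₁ : Type*} [Fintype Ω₁] [Nonempty Ω₁] (T : ℕ)
    (R : ℕ → (ℕ → Ω₁) → Set (Ω₁ → ℝ)) (f : ℕ → (ℕ → Ω₁) → ℝ)
    (hR : GoodKernels T R) (hf : AdaptedProc T f) :
    (∀ ω, supValue T R f T ω = f T ω) ∧
    (∀ t, t < T → ∀ ω,
      supValue T R f t ω = max (f t ω) (NE T R t (supValue T R f (t + 1)) ω)) ∧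
    IsStopAt T 0 (fun ω => sInf {t : ℕ | f t ω = supValue T R f t ω}) ∧
    (∀ ω, supValue T R f 0 ω =
      NE T R 0 (fun ω' => f (sInf {t : ℕ | f t ω' = supValue T R f t ω'}) ω') ω) :=
  stmt12_general T R f hR hf
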